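/- Suppose α is an arc or curve containing two distinct blockers β and γ. Then β and γ overlap in at most one snippet; this overlapping snippet must be a vertical dual, and overlap is only possible if β and γ are both right blockers or both left blockers. Moreover, no two blockers can intersect in exactly one endpoint (i.e., be directly adjacent). -/

import Mathlib

section Blockers

variable {Region : Type} {comp : Region → Prop} {n : ℕ} {reg : ℕ → Region}
  {vertDualR vertDualL branchDual IsBlockerR IsBlockerL : ℕ → Prop} {i : ℕ}

theorem blocker_snippets
    (h_BR : ∀ i, IsBlockerR i ↔
        i + 2 < n ∧ vertDualR i ∧ branchDual (i + 1) ∧ vertDualR (i + 2))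
    (h_BL : ∀ i, IsBlockerL i ↔
        i + 2 < n ∧ vertDualL i ∧ branchDual (i + 1) ∧ vertDualL (i + 2))
    (hi : IsBlockerR i ∨ IsBlockerL i) :
    i + 2 < n ∧ (vertDualR i ∨ vertDualL i) ∧ branchDual (i + 1) ∧
      (vertDualR (i + 2) ∨ vertDualL (i + 2)) := by
  rcases hi with hR | hL
  · obtain ⟨hn, h₀, h₁, h₂⟩ := (h_BR i).1 hR
    exact ⟨hn, .inl h₀, h₁, .inl h₂⟩
  · obtain ⟨hn, h₀, h₁, h₂⟩ := (h_BL i).1 hL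
    exact ⟨hn, .inr h₀, h₁, .inr h₂⟩

/-- The middle snippet of a blocker lies in the tie neighbourhood, so it cannot start another
blocker. -/
theorem not_blocker_succ
    (h_vd_comp : ∀ i, vertDualR i ∨ vertDualL i → comp (reg i))
    (h_bd_tie : ∀ i, branchDual i → ¬ comp (reg i))
    (h_BR : ∀ i, IsBlockerR i ↔
        i + 2 < n ∧ vertDualR i ∧ branchDual (i + 1) ∧ vertDualR (i + 2))
    (h_BL : ∀ i, IsBlockerL i ↔
        i + 2 < n ∧ vertDualL i ∧ branchDual (i + 1) ∧ vertDualL (i + 2))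
    (hi : IsBlockerR i ∨ IsBlockerL i) :
    ¬(IsBlockerR (i + 1) ∨ IsBlockerL (i + 1)) := fun hj =>
  h_bd_tie _ (blocker_snippets h_BR h_BL hi).2.2.1
    (h_vd_comp _ (blocker_snippets h_BR h_BL hj).2.1)

/-- Adjacent blockers would put two consecutive snippets in complementary regions. -/
theorem not_blocker_add_three
    (h_sep : ∀ i, i + 1 < n → ¬(comp (reg i) ∧ comp (reg (i + 1))))
    (h_vd_comp : ∀ i, vertDualR i ∨ vertDualL i → comp (reg i))
    (h_BR : ∀ i, IsBlockerR i ↔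
        i + 2 < n ∧ vertDualR i ∧ branchDual (i + 1) ∧ vertDualR (i + 2))
    (h_BL : ∀ i, IsBlockerL i ↔
        i + 2 < n ∧ vertDualL i ∧ branchDual (i + 1) ∧ vertDualL (i + 2))
    (hi : IsBlockerR i ∨ IsBlockerL i) :
    ¬(IsBlockerR (i + 3) ∨ IsBlockerL (i + 3)) := fun hj => by
  obtain ⟨-, -, -, hend⟩ := blocker_snippets h_BR h_BL hi
  obtain ⟨hn, hstart, -⟩ := blocker_snippets h_BR h_BL hj
  exact h_sep (i + 2) (by omega) ⟨h_vd_comp _ hend, h_vd_comp _ hstart⟩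

theorem blocker_add_two_same_side
    (h_not_both : ∀ i, ¬(vertDualR i ∧ vertDualL i))
    (h_BR : ∀ i, IsBlockerR i ↔
        i + 2 < n ∧ vertDualR i ∧ branchDual (i + 1) ∧ vertDualR (i + 2))
    (h_BL : ∀ i, IsBlockerL i ↔
        i + 2 < n ∧ vertDualL i ∧ branchDual (i + 1) ∧ vertDualL (i + 2))
    (hi : IsBlockerR i ∨ IsBlockerL i) (hj : IsBlockerR (i + 2) ∨ IsBlockerL (i + 2)) :
    (IsBlockerR i ∧ IsBlockerR (i + 2)) ∨ (IsBlockerL i ∧ IsBlockerL (i + 2)) := by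
  rcases hi with hiR | hiL <;> rcases hj with hjR | hjL
  · exact .inl ⟨hiR, hjR⟩
  · exact (h_not_both _ ⟨((h_BR i).1 hiR).2.2.2, ((h_BL _).1 hjL).2.1⟩).elim
  · exact (h_not_both _ ⟨((h_BR _).1 hjR).2.1, ((h_BL i).1 hiL).2.2.2⟩).elim
  · exact .inr ⟨hiL, hjL⟩

end Blockers

theorem eq_of_mem_Icc_add_two_inter {i j k : ℕ} (hij : i ≠ j) (hj : j ≠ i + 1) (hi : i ≠ j + 1)
    (hk : k ∈ Finset.Icc i (i + 2) ∩ Finset.Icc j (j + 2)) :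
    (k = i + 2 ∧ j = i + 2) ∨ (k = j + 2 ∧ i = j + 2) := by
  simp only [Finset.mem_inter, Finset.mem_Icc] at hk
  omega

theorem stmt_7_general
    (Region : Type) (comp : Region → Prop)
    (n : ℕ) (reg : ℕ → Region)
    (h_sep : ∀ i, i + 1 < n → ¬(comp (reg i) ∧ comp (reg (i + 1))))
    (vertDualR vertDualL branchDual : ℕ → Prop)
    (h_vd_comp : ∀ i, vertDualR i ∨ vertDualL i → comp (reg i))
    (h_bd_tie : ∀ i, branchDual i → ¬ comp (reg i))
    (h_not_both : ∀ i, ¬(vertDualR i ∧ vertDualL i))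
    (IsBlockerR IsBlockerL : ℕ → Prop)
    (h_BR : ∀ i, IsBlockerR i ↔
        i + 2 < n ∧ vertDualR i ∧ branchDual (i + 1) ∧ vertDualR (i + 2))
    (h_BL : ∀ i, IsBlockerL i ↔
        i + 2 < n ∧ vertDualL i ∧ branchDual (i + 1) ∧ vertDualL (i + 2)) :
    ∀ i j, i ≠ j →
      (IsBlockerR i ∨ IsBlockerL i) → (IsBlockerR j ∨ IsBlockerL j) →
      ((Finset.Icc i (i + 2) ∩ Finset.Icc j (j + 2)).card ≤ 1 ∧
        ((Finset.Icc i (i + 2) ∩ Finset.Icc j (j + 2)).Nonempty →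
          ((IsBlockerR i ∧ IsBlockerR j) ∨ (IsBlockerL i ∧ IsBlockerL j)) ∧
          ∀ k ∈ Finset.Icc i (i + 2) ∩ Finset.Icc j (j + 2),
            vertDualR k ∨ vertDualL k) ∧
        j ≠ i + 3 ∧ i ≠ j + 3) := by
  intro i j hij hi hj
  have hj₁ : j ≠ i + 1 := by
    rintro rfl; exact not_blocker_succ h_vd_comp h_bd_tie h_BR h_BL hi hj
  have hi₁ : i ≠ j + 1 := by
    rintro rfl; exact not_blocker_succ h_vd_comp h_bd_tie h_BR h_BL hj hi
  have hmem := fun k (hk : k ∈ Finset.Icc i (i + 2) ∩ Finset.Icc j (j + 2)) =>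
    eq_of_mem_Icc_add_two_inter hij hj₁ hi₁ hk
  have hcard : (Finset.Icc i (i + 2) ∩ Finset.Icc j (j + 2)).card ≤ 1 :=
    Finset.card_le_one.2 fun a ha b hb => by
      have := hmem a ha; have := hmem b hb; omega
  refine ⟨hcard, fun ⟨k, hk⟩ => ⟨?_, ?_⟩, ?_, ?_⟩
  · rcases hmem k hk with ⟨-, rfl⟩ | ⟨-, rfl⟩
    · exact blocker_add_two_same_side h_not_both h_BR h_BL hi hj
    · exact (blocker_add_two_same_side h_not_both h_BR h_BL hj hi).imp And.symm And.symm
  · intro k hk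
    rcases hmem k hk with ⟨rfl, -⟩ | ⟨rfl, -⟩
    · exact (blocker_snippets h_BR h_BL hi).2.2.2
    · exact (blocker_snippets h_BR h_BL hj).2.2.2
  · rintro rfl; exact not_blocker_add_three h_sep h_vd_comp h_BR h_BL hi hj
  · rintro rfl; exact not_blocker_add_three h_sep h_vd_comp h_BR h_BL hj hi

/-- Overlap of blockers.  Model a snippet-decomposed arc or curve `α` with
`n` snippets by the function `reg` recording the region containing each snippet; consecutive
snippets lie in distinct regions, and no two consecutive snippets both lie in complementary
regions (complementary regions are separated by the tie neighbourhood).  A snippet may be a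
right or left vertical dual (then it lies in a complementary region, and it cannot be both),
or a dual tie in a branch rectangle (then it does not lie in a complementary region).  A right
(resp. left) blocker starting at `i` consists of the snippets `i, i+1, i+2`, where `i` and
`i+2` are right (resp. left) vertical duals and `i+1` is a branch dual.

Then any two distinct blockers overlap in at most one snippet; if they overlap, both are right
blockers or both are left blockers, and every common snippet is a vertical dual.  Moreover, no
two blockers intersect in exactly one endpoint (i.e. are directly adjacent: `j = i + 3` or
`i = j + 3` is impossible). -/
theorem stmt_7
    (Region : Type) (comp : Region → Prop)
    (n : ℕ) (reg : ℕ → Region)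
    (h_adj : ∀ i, i + 1 < n → reg i ≠ reg (i + 1))
    (h_sep : ∀ i, i + 1 < n → ¬(comp (reg i) ∧ comp (reg (i + 1))))
    (vertDualR vertDualL branchDual : ℕ → Prop)
    (h_vd_comp : ∀ i, vertDualR i ∨ vertDualL i → comp (reg i))
    (h_bd_tie : ∀ i, branchDual i → ¬ comp (reg i))
    (h_not_both : ∀ i, ¬(vertDualR i ∧ vertDualL i))
    (IsBlockerR IsBlockerL : ℕ → Prop)
    (h_BR : ∀ i, IsBlockerR i ↔
        i + 2 < n ∧ vertDualR i ∧ branchDual (i + 1) ∧ vertDualR (i + 2))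
    (h_BL : ∀ i, IsBlockerL i ↔
        i + 2 < n ∧ vertDualL i ∧ branchDual (i + 1) ∧ vertDualL (i + 2)) :
    ∀ i j, i ≠ j →
      (IsBlockerR i ∨ IsBlockerL i) → (IsBlockerR j ∨ IsBlockerL j) →
      ((Finset.Icc i (i + 2) ∩ Finset.Icc j (j + 2)).card ≤ 1 ∧
        ((Finset.Icc i (i + 2) ∩ Finset.Icc j (j + 2)).Nonempty →
          ((IsBlockerR i ∧ IsBlockerR j) ∨ (IsBlockerL i ∧ IsBlockerL j)) ∧
          ∀ k ∈ Finset.Icc i (i + 2) ∩ Finset.Icc j (j + 2),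
            vertDualR k ∨ vertDualL k) ∧
        j ≠ i + 3 ∧ i ≠ j + 3) :=
  stmt_7_general Region comp n reg h_sep vertDualR vertDualL branchDual h_vd_comp h_bd_tie
    h_not_both IsBlockerR IsBlockerL h_BR h_BL
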